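/- (Dilation via the projection lemma) Let A ∈ ℝ^{n×n} and let P ∈ S^n be positive definite. Then the symmetric block matrix [[PA + AᵀP − P, P], [P, −P]] is negative definite if and only if there exists V ∈ ℝ^{n×n} such that the 3×3 symmetric block matrix [[−(V + Vᵀ), VᵀA + P, Vᵀ], [(VᵀA + P)ᵀ, −P, 0], [V, 0, −P]] is negative definite. -/

import Mathlib

open Matrix

/-- A 3×3 symmetric-pattern block matrix assembled from the indicated blocks. -/
def Matrix.block3 {n m p : Type*} (A : Matrix n n ℝ) (B : Matrix n m ℝ) (C : Matrix n p ℝ)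
    (D : Matrix m n ℝ) (E : Matrix m m ℝ) (F : Matrix m p ℝ)
    (G : Matrix p n ℝ) (H : Matrix p m ℝ) (I : Matrix p p ℝ) :
    Matrix (n ⊕ (m ⊕ p)) (n ⊕ (m ⊕ p)) ℝ :=
  Matrix.fromBlocks A (Matrix.fromCols B C) (Matrix.fromRows D G)
    (Matrix.fromBlocks E F H I)

/-!
The terms of the 3×3 matrix that involve `V` are `E₁ᵀ Vᵀ F + Fᵀ V E₁` with `E₁ = [1, 0, 0]` and `F = [-1, A, 1]`. The
columns of `T = [[A, 1], [1, 0], [0, 1]]` span the kernel of `F`, so the congruence `Tᵀ (·) T`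
removes `V` and leaves exactly the 2×2 matrix: this is the backward direction, for every `V`.

Conversely, restricting the 2×2 matrix to the diagonal gives the Lyapunov inequality
`PA + AᵀP < 0`, so `1` is not an eigenvalue of `A`. Then `V = (1 - Aᵀ)⁻¹ P` satisfies
`VᵀA + P = Vᵀ`, and the Schur complement of the 3×3 matrix with respect to `diag(-P, -P)` becomes
`-(V + Vᵀ) + 2 VᵀP⁻¹V = (P⁻¹V)ᵀ (PA + AᵀP) (P⁻¹V) < 0`.
-/

namespace Matrix

variable {l m n : Type*} [Fintype m] [Fintype n] [DecidableEq m] [DecidableEq n]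

theorem posDef_fromBlocks₂₂_iff (A : Matrix m m ℝ) (B : Matrix m n ℝ) {D : Matrix n n ℝ}
    (hD : D.PosDef) : (fromBlocks A B Bᵀ D).PosDef ↔ (A - B * D⁻¹ * Bᵀ).PosDef := by
  have := hD.isUnit.invertible
  have hpsd := PosDef.fromBlocks₂₂ A B hD
  have hdet := det_fromBlocks₂₂ A B Bᵀ D
  simp only [conjTranspose_eq_transpose_of_trivial, invOf_eq_nonsing_inv] at hpsd hdet
  refine ⟨fun h => ?_, fun h => ?_⟩
  · rw [(hpsd.1 h.posSemidef).posDef_iff_det_ne_zero]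
    exact right_ne_zero_of_mul (hdet ▸ h.det_pos.ne')
  · rw [(hpsd.2 h.posSemidef).posDef_iff_det_ne_zero, hdet]
    exact mul_ne_zero hD.det_pos.ne' h.det_pos.ne'

theorem posDef_fromBlocks_fromCols_iff {p : Type*} [Fintype p] [DecidableEq p]
    (A : Matrix m m ℝ) (B : Matrix m n ℝ) (C : Matrix m p ℝ) {D : Matrix n n ℝ}
    {E : Matrix p p ℝ} (hD : D.PosDef) (hE : E.PosDef) :
    (fromBlocks A (fromCols B C) (fromCols B C)ᵀ (fromBlocks D 0 0 E)).PosDef ↔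
      (A - B * D⁻¹ * Bᵀ - C * E⁻¹ * Cᵀ).PosDef := by
  have hDE : (fromBlocks D 0 0 E).PosDef := by
    simpa using (posDef_fromBlocks₂₂_iff D (0 : Matrix n p ℝ) hE).2 (by simpa using hD)
  rw [posDef_fromBlocks₂₂_iff _ _ hDE, inv_fromBlocks_zero₂₁_of_isUnit_iff _ _ _
    (iff_of_true hD.isUnit hE.isUnit), transpose_fromCols, fromCols_mul_fromBlocks,
    fromCols_mul_fromRows, sub_add_eq_sub_sub]
  simp

theorem mulVec_injective_fromRows_one (B : Matrix l n ℝ) :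
    Function.Injective (fromRows B (1 : Matrix n n ℝ)).mulVec := fun v w h => by
  simpa using congrArg (· ∘ Sum.inr) h

end Matrix

section Dilation

variable {n : Type*} [Fintype n] [DecidableEq n]

theorem transpose_mul_block3_mul (A V : Matrix n n ℝ) {P : Matrix n n ℝ} (hP : P.IsSymm) :
    (fromRows (fromCols A (1 : Matrix n n ℝ)) (1 : Matrix (n ⊕ n) (n ⊕ n) ℝ))ᵀ *
        block3 (-(V + Vᵀ)) (Vᵀ * A + P) Vᵀ (Vᵀ * A + P)ᵀ (-P) 0 V 0 (-P) *
        fromRows (fromCols A (1 : Matrix n n ℝ)) (1 : Matrix (n ⊕ n) (n ⊕ n) ℝ) =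
      fromBlocks (P * A + Aᵀ * P - P) P P (-P) := by
  rw [block3, transpose_fromRows, transpose_fromCols, fromCols_mul_fromBlocks,
    fromCols_mul_fromRows]
  simp only [Matrix.add_mul, transpose_one, Matrix.one_mul, Matrix.mul_one, fromRows_mul,
    mul_fromCols, fromCols_fromRows_eq_fromBlocks, fromBlocks_add, fromBlocks_inj, transpose_add,
    transpose_mul, transpose_transpose, hP.eq]
  exact ⟨by noncomm_ring, by noncomm_ring, by noncomm_ring, by abel⟩

theorem posDef_neg_fromBlocks_of_posDef_neg_block3 {A P V : Matrix n n ℝ} (hP : P.IsSymm)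
    (hV : (-(block3 (-(V + Vᵀ)) (Vᵀ * A + P) Vᵀ (Vᵀ * A + P)ᵀ (-P) 0 V 0 (-P))).PosDef) :
    (-(fromBlocks (P * A + Aᵀ * P - P) P P (-P))).PosDef := by
  have := hV.conjTranspose_mul_mul_same (mulVec_injective_fromRows_one (fromCols A 1))
  rwa [conjTranspose_eq_transpose_of_trivial, Matrix.mul_neg, Matrix.neg_mul,
    transpose_mul_block3_mul A V hP] at this

theorem transpose_mul_fromBlocks_mul (A B C D : Matrix n n ℝ) :
    (fromRows (1 : Matrix n n ℝ) (1 : Matrix n n ℝ))ᵀ * fromBlocks A B C D *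
      fromRows (1 : Matrix n n ℝ) (1 : Matrix n n ℝ) = A + B + C + D := by
  rw [transpose_fromRows, fromCols_mul_fromBlocks, fromCols_mul_fromRows]
  simp only [transpose_one, Matrix.one_mul, Matrix.mul_one]
  abel

theorem posDef_neg_lyapunov_of_posDef_neg_fromBlocks {A P : Matrix n n ℝ}
    (h : (-(fromBlocks (P * A + Aᵀ * P - P) P P (-P))).PosDef) :
    (-(P * A + Aᵀ * P)).PosDef := by
  have := h.conjTranspose_mul_mul_same (mulVec_injective_fromRows_one (1 : Matrix n n ℝ))
  rwa [conjTranspose_eq_transpose_of_trivial, Matrix.mul_neg, Matrix.neg_mul,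
    transpose_mul_fromBlocks_mul, sub_add_cancel, add_neg_cancel_right] at this

theorem isUnit_one_sub_of_posDef_neg_lyapunov {A P : Matrix n n ℝ} (hP : P.PosSemidef)
    (hA : (-(P * A + Aᵀ * P)).PosDef) : IsUnit (1 - A) := by
  rw [isUnit_iff_isUnit_det, isUnit_iff_ne_zero, Ne, ← exists_mulVec_eq_zero_iff]
  rintro ⟨x, hx, hAx⟩
  have hfix : A *ᵥ x = x := by
    rw [sub_mulVec, one_mulVec, sub_eq_zero] at hAx
    exact hAx.symm
  have hquad : star x ⬝ᵥ (-(P * A + Aᵀ * P)) *ᵥ x = -(2 * (star x ⬝ᵥ P *ᵥ x)) := by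
    rw [star_trivial, neg_mulVec, add_mulVec, ← mulVec_mulVec, ← mulVec_mulVec, hfix,
      dotProduct_neg, dotProduct_add, dotProduct_mulVec x Aᵀ, vecMul_transpose, hfix]
    ring
  linarith [hA.dotProduct_mulVec_pos hx, hP.dotProduct_mulVec_nonneg x]

theorem posDef_neg_block3_of_one_sub_transpose_mul_eq {A P V : Matrix n n ℝ} (hP : P.PosDef)
    (hA : (-(P * A + Aᵀ * P)).PosDef) (hV : (1 - Aᵀ) * V = P) :
    (-(block3 (-(V + Vᵀ)) (Vᵀ * A + P) Vᵀ (Vᵀ * A + P)ᵀ (-P) 0 V 0 (-P))).PosDef := by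
  have hPs : Pᵀ = P := (isHermitian_iff_isSymm.mp hP.1).eq
  have hAV : Aᵀ * V = V - P := by rw [← hV]; noncomm_ring
  have hVA : Vᵀ * A = Vᵀ - P := by
    rw [← hPs, ← transpose_transpose A, ← transpose_mul, hAV, transpose_sub]
  have hblocks : -(block3 (-(V + Vᵀ)) Vᵀ Vᵀ Vᵀᵀ (-P) 0 V 0 (-P)) =
      fromBlocks (V + Vᵀ) (fromCols (-Vᵀ) (-Vᵀ)) (fromCols (-Vᵀ) (-Vᵀ))ᵀ (fromBlocks P 0 0 P) := by
    simp [block3, fromBlocks_neg, transpose_fromCols, fromRows_neg]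
  rw [hVA, sub_add_cancel, hblocks, posDef_fromBlocks_fromCols_iff _ _ _ hP hP]
  have hPd : IsUnit P.det := (isUnit_iff_isUnit_det P).mp hP.isUnit
  have hschur : V + Vᵀ - -Vᵀ * P⁻¹ * (-Vᵀ)ᵀ - -Vᵀ * P⁻¹ * (-Vᵀ)ᵀ =
      (P⁻¹ * V)ᴴ * (-(P * A + Aᵀ * P)) * (P⁻¹ * V) := by
    calc _ = -((Vᵀ - P) * P⁻¹ * V + Vᵀ * P⁻¹ * (V - P)) := by
          simp only [transpose_neg, transpose_transpose, neg_mul, mul_neg, neg_neg, sub_mul,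
            mul_sub, mul_nonsing_inv _ hPd, Matrix.one_mul, nonsing_inv_mul_cancel_right _ _ hPd]
          abel
      _ = -(Vᵀ * A * P⁻¹ * V + Vᵀ * P⁻¹ * (Aᵀ * V)) := by rw [hVA, hAV]
      _ = _ := by
          simp only [conjTranspose_eq_transpose_of_trivial, transpose_mul, transpose_nonsing_inv,
            hPs, mul_neg, neg_mul, mul_add, add_mul, Matrix.mul_assoc,
            nonsing_inv_mul_cancel_left _ _ hPd, mul_nonsing_inv_cancel_left _ _ hPd]
  have hVu : IsUnit V := isUnit_of_mul_isUnit_right (hV ▸ hP.isUnit)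
  rw [hschur]
  exact hA.conjTranspose_mul_mul_same
    (mulVec_injective_of_isUnit ((isUnit_nonsing_inv_iff.mpr hP.isUnit).mul hVu))

end Dilation

/-- Dilation via the projection lemma: for `P > 0`,
`[[PA + AᵀP − P, P], [P, −P]] < 0` iff there exists `V` such that
`[[−(V + Vᵀ), VᵀA + P, Vᵀ], [(VᵀA + P)ᵀ, −P, 0], [V, 0, −P]] < 0`. -/
theorem dilation_via_projection (n : ℕ)
    (A P : Matrix (Fin n) (Fin n) ℝ) (hP : P.PosDef) :
    (-(Matrix.fromBlocks (P * A + Aᵀ * P - P) P P (-P))).PosDef ↔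
      (∃ V : Matrix (Fin n) (Fin n) ℝ,
        (-(Matrix.block3 (-(V + Vᵀ)) (Vᵀ * A + P) Vᵀ
            (Vᵀ * A + P)ᵀ (-P) 0
            V 0 (-P))).PosDef) := by
  refine ⟨fun hL => ?_, fun ⟨V, hV⟩ =>
    posDef_neg_fromBlocks_of_posDef_neg_block3 (isHermitian_iff_isSymm.mp hP.1) hV⟩
  have hA := posDef_neg_lyapunov_of_posDef_neg_fromBlocks hL
  have hB : IsUnit (1 - Aᵀ).det := by
    rw [← transpose_one, ← transpose_sub, det_transpose, ← isUnit_iff_isUnit_det]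
    exact isUnit_one_sub_of_posDef_neg_lyapunov hP.posSemidef hA
  exact ⟨(1 - Aᵀ)⁻¹ * P,
    posDef_neg_block3_of_one_sub_transpose_mul_eq hP hA (mul_nonsing_inv_cancel_left _ _ hB)⟩
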